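/- Let p > 2, S ⊆ {0,…,N−1}^d, E = S + [0,1]^d, and suppose the Λ(p) estimate ‖∑_{a∈S} c_a e^{2πi a·x}‖_{L^p([0,1]^d)} ≤ C (∑|c_a|^2)^{1/2} holds for all coefficients. Then for every h ∈ L^2(ℝ^d) supported on E, one has ‖ĥ‖_{L^p([0,1]^d)} ≲ C ‖h‖_{L^2(ℝ^d)}, with implicit constant depending only on d and p. -/

import Mathlib

/-!
Split `x = a + z` with `a ∈ S` and `z` in the unit cell `[0,1)^d`. Then
`ĥ(ξ) = ∫_{[0,1)^d} G_z(ξ) dz` with `G_z(ξ) = ∑_{a ∈ S} h(a + z) e(-(a + z)·ξ)`, and since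
`e(-(a + z)·ξ) = e(-z·ξ) · conj e(a·ξ)`, `|G_z|` is the modulus of the exponential sum over `S`
with coefficients `conj h(a + z)`. Minkowski's integral inequality and the `Λ(p)` hypothesis give
`‖ĥ‖_{L^p} ≤ ∫ ‖G_z‖_{L^p} dz ≤ C ∫ (∑_a |h(a + z)|²)^{1/2} dz`, and Cauchy–Schwarz on the unit
cell (a probability space) bounds the last integral by `‖h‖_{L²}`. So `D = 1` works.
-/

open MeasureTheory ENNReal Function

section Minkowski

variable {α β : Type*} [MeasurableSpace α] [MeasurableSpace β] {μ : Measure α} {ν : Measure β}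
  [SFinite μ] [SFinite ν] {p q : ℝ} {f : α → β → ℝ≥0∞}

/-- The core of Minkowski's integral inequality: writing `I ξ = ∫⁻ z, f z ξ ∂μ`, split `I ^ p = I * I ^ (p - 1)`, swap the integrals and
apply Hölder's inequality in `ξ` to `f z * I ^ (p - 1)`. -/
theorem lintegral_rpow_lintegral_le_mul (hpq : p.HolderConjugate q) (hf : Measurable (uncurry f))
    (hfin : ∫⁻ ξ, (∫⁻ z, f z ξ ∂μ) ^ p ∂ν ≠ ∞) :
    ∫⁻ ξ, (∫⁻ z, f z ξ ∂μ) ^ p ∂ν ≤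
      (∫⁻ z, (∫⁻ ξ, f z ξ ^ p ∂ν) ^ (1 / p) ∂μ) * (∫⁻ ξ, (∫⁻ z, f z ξ ∂μ) ^ p ∂ν) ^ (1 / q) := by
  set I : β → ℝ≥0∞ := fun ξ => ∫⁻ z, f z ξ ∂μ
  have hI : Measurable I := hf.lintegral_prod_left
  calc ∫⁻ ξ, I ξ ^ p ∂ν = ∫⁻ ξ, (∫⁻ z, f z ξ ∂μ) * I ξ ^ (p - 1) ∂ν := by
        refine lintegral_congr fun ξ => ?_
        conv_lhs => rw [← add_sub_cancel 1 p]
        rw [ENNReal.rpow_add_of_nonneg _ _ zero_le_one hpq.sub_one_pos.le, ENNReal.rpow_one]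
    _ = ∫⁻ ξ, ∫⁻ z, f z ξ * I ξ ^ (p - 1) ∂μ ∂ν :=
        lintegral_congr fun ξ => (lintegral_mul_const _ hf.of_uncurry_right).symm
    _ = ∫⁻ z, ∫⁻ ξ, f z ξ * I ξ ^ (p - 1) ∂ν ∂μ :=
        lintegral_lintegral_swap
          ((hf.comp measurable_swap).mul ((hI.comp measurable_fst).pow_const _)).aemeasurable
    _ ≤ ∫⁻ z, (∫⁻ ξ, f z ξ ^ p ∂ν) ^ (1 / p) * (∫⁻ ξ, I ξ ^ p ∂ν) ^ (1 / q) ∂μ :=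
        lintegral_mono fun z => ENNReal.lintegral_mul_rpow_le_lintegral_rpow_mul_lintegral_rpow
          hpq hf.of_uncurry_left.aemeasurable hI.aemeasurable
    _ = _ := lintegral_mul_const' _ _ (rpow_ne_top_of_nonneg hpq.symm.one_div_nonneg hfin)

theorem rpow_lintegral_rpow_lintegral_le (hp : 1 < p) (hf : Measurable (uncurry f))
    (hfin : ∫⁻ ξ, (∫⁻ z, f z ξ ∂μ) ^ p ∂ν ≠ ∞) :
    (∫⁻ ξ, (∫⁻ z, f z ξ ∂μ) ^ p ∂ν) ^ (1 / p) ≤ ∫⁻ z, (∫⁻ ξ, f z ξ ^ p ∂ν) ^ (1 / p) ∂μ := by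
  set A := ∫⁻ ξ, (∫⁻ z, f z ξ ∂μ) ^ p ∂ν
  have hpq := Real.HolderConjugate.conjExponent hp
  rcases eq_or_ne A 0 with hA | hA
  · simp [hA, ENNReal.zero_rpow_of_pos, hpq.pos]
  have hsplit : A ^ (1 / p) * A ^ (1 / p.conjExponent) = A := by
    rw [← ENNReal.rpow_add_of_nonneg _ _ hpq.one_div_nonneg hpq.symm.one_div_nonneg,
      hpq.one_div_add_one_div, div_one, ENNReal.rpow_one]
  refine (ENNReal.mul_le_mul_iff_left ?_ ?_).1
    (hsplit.trans_le (lintegral_rpow_lintegral_le_mul hpq hf hfin))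
  · simp [hA, hfin, ENNReal.rpow_eq_zero_iff]
  · exact rpow_ne_top_of_nonneg hpq.symm.one_div_nonneg hfin

end Minkowski

section Lebesgue

variable {α : Type*} [MeasurableSpace α] {μ : Measure α}

theorem lintegral_rpow_half_le [IsProbabilityMeasure μ] {g : α → ℝ≥0∞} (hg : AEMeasurable g μ) :
    ∫⁻ x, g x ^ (1 / 2 : ℝ) ∂μ ≤ (∫⁻ x, g x ∂μ) ^ (1 / 2 : ℝ) := by
  have := eLpNorm'_le_eLpNorm'_of_exponent_le one_pos one_le_two μ
    (hg.pow_const (1 / 2 : ℝ)).aestronglyMeasurable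
  simp_rw [eLpNorm', enorm_eq_self, ← ENNReal.rpow_mul] at this
  norm_num at this
  exact this

theorem rpow_lintegral_enorm_rpow_eq_ofReal {E : Type*} [NormedAddCommGroup E] {u : α → E}
    {p : ℝ} (hp : 0 < p) (hu : Integrable (fun x => ‖u x‖ ^ p) μ) :
    (∫⁻ x, ‖u x‖ₑ ^ p ∂μ) ^ (1 / p) = ENNReal.ofReal ((∫ x, ‖u x‖ ^ p ∂μ) ^ (1 / p)) := by
  rw [← ENNReal.ofReal_rpow_of_nonneg (integral_nonneg fun _ => by positivity) (by positivity),
    ofReal_integral_eq_lintegral_ofReal hu (.of_forall fun _ => by positivity)]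
  congr 1
  refine lintegral_congr fun x => ?_
  rw [← ENNReal.ofReal_rpow_of_nonneg (norm_nonneg _) hp.le, ofReal_norm]

end Lebesgue

theorem ofReal_sqrt_sum_norm_sq {ι E : Type*} [NormedAddCommGroup E] (s : Finset ι) (c : ι → E) :
    ENNReal.ofReal √(∑ i ∈ s, ‖c i‖ ^ 2) = (∑ i ∈ s, ‖c i‖ₑ ^ (2 : ℝ)) ^ (1 / 2 : ℝ) := by
  rw [Real.sqrt_eq_rpow, ← ENNReal.ofReal_rpow_of_nonneg (by positivity) (by norm_num),
    ENNReal.ofReal_sum_of_nonneg fun _ _ => by positivity]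
  congr 2 with i
  rw [← ofReal_norm, ENNReal.ofReal_rpow_of_nonneg (norm_nonneg _) (by norm_num), Real.rpow_two]

noncomputable section UnitCell

variable {d : ℕ}

def latticePoint (a : Fin d → ℤ) : Fin d → ℝ := fun i => a i

/-- Half-open, so that distinct cells are disjoint. -/
def unitCell (a : Fin d → ℤ) : Set (Fin d → ℝ) :=
  Set.univ.pi fun i => Set.Ico (a i : ℝ) (a i + 1)

def sumTranslates {E : Type*} [AddCommMonoid E] (S : Finset (Fin d → ℤ)) (f : (Fin d → ℝ) → E)
    (z : Fin d → ℝ) : E :=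
  ∑ a ∈ S, f (latticePoint a + z)

theorem measurableSet_unitCell (a : Fin d → ℤ) : MeasurableSet (unitCell a) :=
  .univ_pi fun _ => measurableSet_Ico

theorem unitCell_ae_eq_Icc (a : Fin d → ℤ) :
    unitCell a =ᵐ[volume] Set.Icc (latticePoint a) (latticePoint a + 1) :=
  Measure.univ_pi_Ico_ae_eq_Icc

theorem volume_unitCell (a : Fin d → ℤ) : volume (unitCell a) = 1 := by
  simp [unitCell, volume_pi_pi, Real.volume_Ico]

instance : IsProbabilityMeasure (volume.restrict (unitCell (0 : Fin d → ℤ))) :=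
  ⟨by rw [Measure.restrict_apply_univ, volume_unitCell]⟩

theorem pairwise_disjoint_unitCell : Pairwise (Disjoint on (unitCell (d := d))) := by
  intro a b hab
  refine Set.disjoint_left.2 fun x hxa hxb => hab (funext fun i => ?_)
  simp only [unitCell, Set.mem_univ_pi, Set.mem_Ico] at hxa hxb
  have h1 : (a i : ℝ) < b i + 1 := (hxa i).1.trans_lt (hxb i).2
  have h2 : (b i : ℝ) < a i + 1 := (hxb i).1.trans_lt (hxa i).2
  norm_cast at h1 h2
  omega

theorem preimage_add_unitCell (a : Fin d → ℤ) :
    (latticePoint a + ·) ⁻¹' unitCell a = unitCell 0 := by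
  ext z
  simp only [unitCell, latticePoint, Set.mem_preimage, Set.mem_univ_pi, Set.mem_Ico, Pi.add_apply,
    Pi.zero_apply, Int.cast_zero, zero_add]
  refine forall_congr' fun i => ?_
  constructor <;> rintro ⟨h1, h2⟩ <;> constructor <;> linarith

theorem lintegral_unitCell_sumTranslates (S : Finset (Fin d → ℤ)) {g : (Fin d → ℝ) → ℝ≥0∞}
    (hg : Measurable g) :
    ∫⁻ z in unitCell 0, sumTranslates S g z = ∫⁻ x in ⋃ a ∈ S, unitCell a, g x := by
  simp only [sumTranslates]
  rw [lintegral_finsetSum' S fun a _ => by fun_prop,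
    lintegral_biUnion_finset (fun a _ b _ hab => pairwise_disjoint_unitCell hab)
      fun a _ => measurableSet_unitCell a]
  refine Finset.sum_congr rfl fun a _ => ?_
  rw [← preimage_add_unitCell a]
  exact (measurePreserving_add_left volume _).setLIntegral_comp_preimage_emb
    (measurableEmbedding_addLeft _) _ _

variable {E : Type*} [NormedAddCommGroup E]

theorem lintegral_enorm_sumTranslates_le (S : Finset (Fin d → ℤ)) {f : (Fin d → ℝ) → E}
    (hf : StronglyMeasurable f) :
    ∫⁻ z in unitCell 0, ‖sumTranslates S f z‖ₑ ≤ ∫⁻ x, ‖f x‖ₑ :=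
  calc ∫⁻ z in unitCell 0, ‖sumTranslates S f z‖ₑ
      ≤ ∫⁻ z in unitCell 0, sumTranslates S (‖f ·‖ₑ) z :=
        lintegral_mono fun _ => enorm_sum_le _ _
    _ = ∫⁻ x in ⋃ a ∈ S, unitCell a, ‖f x‖ₑ :=
        lintegral_unitCell_sumTranslates S hf.enorm
    _ ≤ ∫⁻ x, ‖f x‖ₑ := setLIntegral_le_lintegral _ _

theorem lintegral_unitCell_sumTranslates_rpow_half_le (S : Finset (Fin d → ℤ))
    {g : (Fin d → ℝ) → ℝ≥0∞} (hg : Measurable g) :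
    ∫⁻ z in unitCell 0, sumTranslates S g z ^ (1 / 2 : ℝ) ≤ (∫⁻ x, g x) ^ (1 / 2 : ℝ) := by
  have hsum : Measurable (sumTranslates S g) := by
    unfold sumTranslates
    fun_prop
  refine (lintegral_rpow_half_le hsum.aemeasurable).trans ?_
  rw [lintegral_unitCell_sumTranslates S hg]
  gcongr
  exact Measure.restrict_le_self

variable [NormedSpace ℝ E]

theorem integral_unitCell_sumTranslates (S : Finset (Fin d → ℤ)) {f : (Fin d → ℝ) → E}
    (hf : Integrable f) :
    ∫ z in unitCell 0, sumTranslates S f z = ∫ x in ⋃ a ∈ S, unitCell a, f x := by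
  simp only [sumTranslates]
  rw [integral_finsetSum _ fun a _ => (hf.comp_add_left _).integrableOn,
    integral_biUnion_finset _ (fun a _ => measurableSet_unitCell a)
      (fun a _ b _ hab => pairwise_disjoint_unitCell hab) fun a _ => hf.integrableOn]
  refine Finset.sum_congr rfl fun a _ => ?_
  rw [← preimage_add_unitCell a]
  exact (measurePreserving_add_left volume _).setIntegral_preimage_emb
    (measurableEmbedding_addLeft _) _ _

theorem integral_eq_integral_unitCell_sumTranslates (S : Finset (Fin d → ℤ))
    {f : (Fin d → ℝ) → E} (hf : Integrable f)
    (hsupp : ∀ᵐ x, x ∉ ⋃ a ∈ S, Set.Icc (latticePoint a) (latticePoint a + 1) → f x = 0) :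
    ∫ x, f x = ∫ z in unitCell 0, sumTranslates S f z := by
  rw [integral_unitCell_sumTranslates S hf,
    setIntegral_congr_set (S.eventuallyEq_iUnion fun a _ => unitCell_ae_eq_Icc a)]
  exact (setIntegral_eq_integral_of_ae_compl_eq_zero hsupp).symm

end UnitCell

noncomputable section Fourier

variable {d : ℕ}

def fourierKernel (x ξ : Fin d → ℝ) : ℂ :=
  Complex.exp (-(2 * Real.pi * Complex.I) * ((∑ i, x i * ξ i : ℝ) : ℂ))

def expSum (S : Finset (Fin d → ℤ)) (c : (Fin d → ℤ) → ℂ) (ξ : Fin d → ℝ) : ℂ :=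
  ∑ a ∈ S, c a * Complex.exp (2 * Real.pi * Complex.I * ((∑ i, (a i : ℝ) * ξ i : ℝ) : ℂ))

def IsLambdaPSet (S : Finset (Fin d → ℤ)) (p C : ℝ) : Prop :=
  ∀ c : (Fin d → ℤ) → ℂ,
    (∫ ξ in Set.Icc (0 : Fin d → ℝ) 1, ‖expSum S c ξ‖ ^ p) ^ (1 / p) ≤ C * √(∑ a ∈ S, ‖c a‖ ^ 2)

theorem norm_fourierKernel (x ξ : Fin d → ℝ) : ‖fourierKernel x ξ‖ = 1 := by
  rw [fourierKernel, Complex.norm_exp]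
  simp

theorem enorm_fourierKernel (x ξ : Fin d → ℝ) : ‖fourierKernel x ξ‖ₑ = 1 := by
  rw [← ofReal_norm, norm_fourierKernel, ENNReal.ofReal_one]

theorem continuous_fourierKernel : Continuous (uncurry (fourierKernel (d := d))) := by
  unfold fourierKernel
  fun_prop

theorem fourierKernel_add (x y ξ : Fin d → ℝ) :
    fourierKernel (x + y) ξ = fourierKernel x ξ * fourierKernel y ξ := by
  simp only [fourierKernel, ← Complex.exp_add, Pi.add_apply, add_mul, Finset.sum_add_distrib]
  push_cast
  ring_nf

theorem fourierKernel_latticePoint (a : Fin d → ℤ) (ξ : Fin d → ℝ) :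
    fourierKernel (latticePoint a) ξ = starRingEnd ℂ
      (Complex.exp (2 * Real.pi * Complex.I * ((∑ i, (a i : ℝ) * ξ i : ℝ) : ℂ))) := by
  simp only [fourierKernel, latticePoint, ← Complex.exp_conj, map_mul, map_ofNat, Complex.conj_I,
    Complex.conj_ofReal]
  ring_nf

theorem continuous_expSum (S : Finset (Fin d → ℤ)) (c : (Fin d → ℤ) → ℂ) :
    Continuous (expSum S c) := by
  unfold expSum
  fun_prop

variable {h : (Fin d → ℝ) → ℂ}

theorem MeasureTheory.Integrable.mul_fourierKernel (hh : Integrable h) (ξ : Fin d → ℝ) :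
    Integrable fun x => h x * fourierKernel x ξ :=
  hh.mul_bdd (continuous_fourierKernel.uncurry_right ξ).aestronglyMeasurable
    (.of_forall fun x => (norm_fourierKernel x ξ).le)

theorem continuous_integral_mul_fourierKernel (hh : Integrable h) :
    Continuous fun ξ => ∫ x, h x * fourierKernel x ξ :=
  continuous_of_dominated (fun ξ => (hh.mul_fourierKernel ξ).1)
    (fun ξ => .of_forall fun x => by rw [norm_mul, norm_fourierKernel, mul_one]) hh.norm
    (.of_forall fun x => continuous_const.mul (continuous_fourierKernel.uncurry_left x))

theorem enorm_sumTranslates_mul_fourierKernel (S : Finset (Fin d → ℤ)) (h : (Fin d → ℝ) → ℂ)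
    (z ξ : Fin d → ℝ) :
    ‖sumTranslates S (fun x => h x * fourierKernel x ξ) z‖ₑ =
      ‖expSum S (fun a => starRingEnd ℂ (h (latticePoint a + z))) ξ‖ₑ := by
  have : sumTranslates S (fun x => h x * fourierKernel x ξ) z = fourierKernel z ξ *
      starRingEnd ℂ (expSum S (fun a => starRingEnd ℂ (h (latticePoint a + z))) ξ) := by
    simp only [sumTranslates, expSum, fourierKernel_add, fourierKernel_latticePoint, map_sum,
      map_mul, Complex.conj_conj, Finset.mul_sum]
    exact Finset.sum_congr rfl fun a _ => by ring
  rw [this, enorm_mul, RCLike.enorm_conj, enorm_fourierKernel, one_mul]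

end Fourier

section Restriction

variable {d : ℕ} {p C : ℝ} {S : Finset (Fin d → ℤ)} {h : (Fin d → ℝ) → ℂ}

theorem enorm_integral_mul_fourierKernel_le (hi : Integrable h)
    (hsupp : ∀ᵐ x, x ∉ ⋃ a ∈ S, Set.Icc (latticePoint a) (latticePoint a + 1) → h x = 0)
    (ξ : Fin d → ℝ) :
    ‖∫ x, h x * fourierKernel x ξ‖ₑ ≤
      ∫⁻ z in unitCell 0, ‖sumTranslates S (fun x => h x * fourierKernel x ξ) z‖ₑ := by
  rw [integral_eq_integral_unitCell_sumTranslates S (hi.mul_fourierKernel ξ)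
    (hsupp.mono fun x hx hxE => by rw [hx hxE, zero_mul])]
  exact enorm_integral_le_lintegral_enorm _

theorem lintegral_enorm_sumTranslates_mul_fourierKernel_le (hm : Measurable h) (ξ : Fin d → ℝ) :
    ∫⁻ z in unitCell 0, ‖sumTranslates S (fun x => h x * fourierKernel x ξ) z‖ₑ ≤
      ∫⁻ x, ‖h x‖ₑ := by
  refine (lintegral_enorm_sumTranslates_le S
    (hm.mul (continuous_fourierKernel.uncurry_right ξ).measurable).stronglyMeasurable).trans_eq
    (lintegral_congr fun x => ?_)
  rw [Pi.mul_apply, enorm_mul, enorm_fourierKernel, mul_one]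

theorem measurable_enorm_sumTranslates_mul_fourierKernel (hm : Measurable h) :
    Measurable (uncurry fun z ξ => ‖sumTranslates S (fun x => h x * fourierKernel x ξ) z‖ₑ) := by
  simp only [sumTranslates, fourierKernel]
  fun_prop

theorem rpow_lintegral_sumTranslates_fourier_le (hp : 0 < p) (hC : 0 ≤ C)
    (hS : IsLambdaPSet S p C) (z : Fin d → ℝ) :
    (∫⁻ ξ in Set.Icc (0 : Fin d → ℝ) 1,
        ‖sumTranslates S (fun x => h x * fourierKernel x ξ) z‖ₑ ^ p) ^ (1 / p) ≤
      ENNReal.ofReal C * sumTranslates S (‖h ·‖ₑ ^ (2 : ℝ)) z ^ (1 / 2 : ℝ) := by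
  set c : (Fin d → ℤ) → ℂ := fun a => starRingEnd ℂ (h (latticePoint a + z))
  have hint : IntegrableOn (fun ξ => ‖expSum S c ξ‖ ^ p) (Set.Icc 0 1) :=
    ((continuous_expSum S c).norm.rpow_const fun _ => .inr hp.le).integrableOn_Icc
  simp_rw [enorm_sumTranslates_mul_fourierKernel]
  rw [rpow_lintegral_enorm_rpow_eq_ofReal hp hint]
  refine (ENNReal.ofReal_le_ofReal (hS c)).trans_eq ?_
  rw [ENNReal.ofReal_mul hC, ofReal_sqrt_sum_norm_sq]
  simp [c, sumTranslates]

theorem rpow_lintegral_fourier_le (hp : 1 < p) (hC : 0 ≤ C) (hS : IsLambdaPSet S p C)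
    (hm : Measurable h) (hi : Integrable h)
    (hsupp : ∀ᵐ x, x ∉ ⋃ a ∈ S, Set.Icc (latticePoint a) (latticePoint a + 1) → h x = 0) :
    (∫⁻ ξ in Set.Icc (0 : Fin d → ℝ) 1, ‖∫ x, h x * fourierKernel x ξ‖ₑ ^ p) ^ (1 / p) ≤
      ENNReal.ofReal C * (∫⁻ x, ‖h x‖ₑ ^ (2 : ℝ)) ^ (1 / 2 : ℝ) := by
  set G : (Fin d → ℝ) → (Fin d → ℝ) → ℂ := fun z ξ =>
    sumTranslates S (fun x => h x * fourierKernel x ξ) z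
  have hfin : ∫⁻ ξ in Set.Icc (0 : Fin d → ℝ) 1, (∫⁻ z in unitCell 0, ‖G z ξ‖ₑ) ^ p ≠ ∞ := by
    refine ne_top_of_le_ne_top ?_ (lintegral_mono fun ξ => ENNReal.rpow_le_rpow
      (lintegral_enorm_sumTranslates_mul_fourierKernel_le hm ξ) (by linarith))
    rw [setLIntegral_const]
    exact mul_ne_top (rpow_ne_top_of_nonneg (by linarith) hi.2.ne)
      isCompact_Icc.measure_lt_top.ne
  calc (∫⁻ ξ in Set.Icc (0 : Fin d → ℝ) 1, ‖∫ x, h x * fourierKernel x ξ‖ₑ ^ p) ^ (1 / p)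
      ≤ (∫⁻ ξ in Set.Icc (0 : Fin d → ℝ) 1, (∫⁻ z in unitCell 0, ‖G z ξ‖ₑ) ^ p) ^ (1 / p) := by
        gcongr with ξ
        exact enorm_integral_mul_fourierKernel_le hi hsupp ξ
    _ ≤ ∫⁻ z in unitCell 0, (∫⁻ ξ in Set.Icc (0 : Fin d → ℝ) 1, ‖G z ξ‖ₑ ^ p) ^ (1 / p) :=
        rpow_lintegral_rpow_lintegral_le hp (measurable_enorm_sumTranslates_mul_fourierKernel hm)
          hfin
    _ ≤ ∫⁻ z in unitCell 0,
          ENNReal.ofReal C * sumTranslates S (‖h ·‖ₑ ^ (2 : ℝ)) z ^ (1 / 2 : ℝ) :=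
        lintegral_mono fun z => rpow_lintegral_sumTranslates_fourier_le (by linarith) hC hS z
    _ = ENNReal.ofReal C *
          ∫⁻ z in unitCell 0, sumTranslates S (‖h ·‖ₑ ^ (2 : ℝ)) z ^ (1 / 2 : ℝ) :=
        lintegral_const_mul' _ _ ofReal_ne_top
    _ ≤ ENNReal.ofReal C * (∫⁻ x, ‖h x‖ₑ ^ (2 : ℝ)) ^ (1 / 2 : ℝ) := by
        gcongr
        exact lintegral_unitCell_sumTranslates_rpow_half_le S (hm.enorm.pow_const _)

theorem rpow_integral_fourier_le (hp : 1 < p) (hC : 0 ≤ C) (hS : IsLambdaPSet S p C)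
    (hm : Measurable h) (hh : MemLp h 2) (hi : Integrable h)
    (hsupp : ∀ᵐ x, x ∉ ⋃ a ∈ S, Set.Icc (latticePoint a) (latticePoint a + 1) → h x = 0) :
    (∫ ξ in Set.Icc (0 : Fin d → ℝ) 1, ‖∫ x, h x * fourierKernel x ξ‖ ^ p) ^ (1 / p) ≤
      C * √(∫ x, ‖h x‖ ^ 2) := by
  have key := rpow_lintegral_fourier_le hp hC hS hm hi hsupp
  have hFp : IntegrableOn (fun ξ => ‖∫ x, h x * fourierKernel x ξ‖ ^ p) (Set.Icc 0 1) :=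
    ((continuous_integral_mul_fourierKernel hi).norm.rpow_const
      fun _ => .inr (by linarith)).integrableOn_Icc
  have hh2 : Integrable fun x => ‖h x‖ ^ (2 : ℝ) := by
    simpa using hh.integrable_norm_rpow two_ne_zero ofNat_ne_top
  rw [rpow_lintegral_enorm_rpow_eq_ofReal (by linarith) hFp,
    rpow_lintegral_enorm_rpow_eq_ofReal two_pos hh2, ← ENNReal.ofReal_mul hC,
    ENNReal.ofReal_le_ofReal_iff (by positivity)] at key
  simpa [Real.sqrt_eq_rpow, Real.rpow_two] using key

end Restriction

/-- continuous version of Bourgain's Λ(p) theorem. If `S ⊆ {0,…,N−1}^d` is a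
Λ(p) set with constant `C` and `E = S + [0,1]^d`, then every `h ∈ L²(ℝ^d)` supported on `E`
satisfies `‖ĥ‖_{L^p([0,1]^d)} ≤ D·C·‖h‖_{L²(ℝ^d)}` with `D` depending only on `d` and `p`. -/
theorem stmt2 (d : ℕ) (p : ℝ) (hp : 2 < p) :
    ∃ D : ℝ, 0 < D ∧
      ∀ (N : ℕ) (C : ℝ), 0 < C →
      ∀ S : Finset (Fin d → ℤ), (∀ a ∈ S, ∀ i, 0 ≤ a i ∧ a i < (N : ℤ)) →
      (∀ c : (Fin d → ℤ) → ℂ,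
        (∫ x in Set.Icc (0 : Fin d → ℝ) 1,
            ‖∑ a ∈ S, c a * Complex.exp (2 * Real.pi * Complex.I *
              ((∑ i, (a i : ℝ) * x i : ℝ) : ℂ))‖ ^ p) ^ (1 / p) ≤
          C * Real.sqrt (∑ a ∈ S, ‖c a‖ ^ 2)) →
      ∀ h : (Fin d → ℝ) → ℂ, MemLp h 2 volume →
      Function.support h ⊆
        ⋃ a ∈ S, Set.Icc (fun i => (a i : ℝ)) (fun i => (a i : ℝ) + 1) →
      (∫ ξ in Set.Icc (0 : Fin d → ℝ) 1,
          ‖∫ x, h x * Complex.exp (-(2 * Real.pi * Complex.I) *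
            ((∑ i, x i * ξ i : ℝ) : ℂ))‖ ^ p) ^ (1 / p) ≤
        D * C * Real.sqrt (∫ x, ‖h x‖ ^ 2) := by
  refine ⟨1, one_pos, fun _ C hC S _ hS h hh hsupp => ?_⟩
  have hzero : ∀ x, x ∉ ⋃ a ∈ S, Set.Icc (latticePoint a) (latticePoint a + 1) → h x = 0 :=
    fun x hx => notMem_support.1 fun hx' => hx (hsupp hx')
  have hi : Integrable h := memLp_one_iff_integrable.1 <|
    hh.mono_exponent_of_measure_support_ne_top hzero
      (measure_biUnion_lt_top S.finite_toSet fun _ _ => isCompact_Icc.measure_lt_top).ne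
      one_le_two
  -- Minkowski's inequality needs joint measurability, so pass to a measurable representative.
  obtain ⟨g, hgm, hhg⟩ := hh.1
  have hg := rpow_integral_fourier_le (by linarith) hC.le hS hgm.measurable (hh.ae_eq hhg)
    (hi.congr hhg) (hhg.mono fun x hx hxE => hx ▸ hzero x hxE)
  have hF : ∀ ξ, ∫ x, h x * fourierKernel x ξ = ∫ x, g x * fourierKernel x ξ := fun ξ =>
    integral_congr_ae (hhg.mono fun x hx => by simp only [hx])
  have hL2 : ∫ x, ‖h x‖ ^ 2 = ∫ x, ‖g x‖ ^ 2 :=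
    integral_congr_ae (hhg.mono fun x hx => by simp only [hx])
  show (∫ ξ in _, ‖∫ x, h x * fourierKernel x ξ‖ ^ p) ^ (1 / p) ≤ 1 * C * √(∫ x, ‖h x‖ ^ 2)
  simpa only [hF, hL2, one_mul] using hg
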